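/- Let G be a clique expansion C_p[k_1, …, k_p] of an odd cycle of length p ≥ 7. Then G contains K_5 as a subgraph, or G contains as a subgraph a clique expansion C_p[2, 2, …, 2, 1, 3, 1, 3, …, 1] (a copies of 2, then a 1, then b consecutive pairs 3,1, where a + 2b = p − 1) or the clique expansion C_p[2, 2, …, 2, 1] (p − 1 copies of 2 followed by a 1), or G is 4-colorable. -/

import Mathlib

open SimpleGraph Finset

/-- The cycle graph on `Fin p` (for `p ≥ 3` this is the cycle `C_p`). -/
def cycleG (p : ℕ) [NeZero p] : SimpleGraph (Fin p) where
  Adj i j := i ≠ j ∧ (i + 1 = j ∨ j + 1 = i)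
  symm := by
    constructor
    rintro i j ⟨h, h'⟩
    exact ⟨h.symm, h'.symm⟩
  loopless := by
    constructor
    rintro i ⟨h, _⟩
    exact h rfl

/-- The clique expansion `C_p[k 0, …, k (p-1)]` of the cycle `C_p`:
vertices of the cycle are replaced by cliques of the prescribed sizes, and
all edges are added between cyclically consecutive cliques. -/
def cliqueExpansion (p : ℕ) [NeZero p] (k : Fin p → ℕ) : SimpleGraph (Σ i : Fin p, Fin (k i)) where
  Adj a b := a ≠ b ∧ (a.1 = b.1 ∨ a.1 + 1 = b.1 ∨ b.1 + 1 = a.1)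
  symm := by
    constructor
    rintro a b ⟨h, h'⟩
    refine ⟨h.symm, ?_⟩
    rcases h' with h' | h' | h'
    · exact Or.inl h'.symm
    · exact Or.inr (Or.inr h')
    · exact Or.inr (Or.inl h')
  loopless := by
    constructor
    rintro a ⟨h, _⟩
    exact h rfl

/-- The join `G ⊕ H` of two graphs: disjoint union plus all edges in between. -/
def joinG {α β : Type*} (G : SimpleGraph α) (H : SimpleGraph β) : SimpleGraph (α ⊕ β) where
  Adj x y :=
    match x, y with
    | Sum.inl a, Sum.inl b => G.Adj a b
    | Sum.inr a, Sum.inr b => H.Adj a b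
    | _, _ => True
  symm := by
    constructor
    rintro (a | a) (b | b) h
    · exact G.symm.symm _ _ h
    · trivial
    · trivial
    · exact H.symm.symm _ _ h
  loopless := by
    constructor
    rintro (a | a) h
    · exact G.loopless.irrefl a h
    · exact H.loopless.irrefl a h

/-- The bull: a triangle with two pendant edges. -/
def bull : SimpleGraph (Fin 5) :=
  SimpleGraph.fromRel (fun a b =>
    (a = 0 ∧ b = 1) ∨ (a = 1 ∧ b = 2) ∨ (a = 2 ∧ b = 3) ∨ (a = 3 ∧ b = 4) ∨ (a = 1 ∧ b = 3))

/-- The claw `K_{1,3}`. -/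
def claw : SimpleGraph (Fin 4) :=
  SimpleGraph.fromRel (fun a b => a = 0 ∧ b ≠ 0)

/-- The chair: the claw with one edge subdivided once. -/
def chair : SimpleGraph (Fin 5) :=
  SimpleGraph.fromRel (fun a b =>
    (a = 0 ∧ b = 1) ∨ (a = 0 ∧ b = 2) ∨ (a = 0 ∧ b = 3) ∨ (a = 3 ∧ b = 4))

/-- `G` contains `H` as a (not necessarily induced) subgraph. -/
def ContainsSub {V W : Type*} (G : SimpleGraph V) (H : SimpleGraph W) : Prop :=
  ∃ f : H →g G, Function.Injective f

/-- The independence number of a finite graph. -/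
noncomputable def indepNum {V : Type*} [Fintype V] (G : SimpleGraph V) : ℕ :=
  sSup {n | ∃ s : Finset V, s.card = n ∧ ∀ a ∈ s, ∀ b ∈ s, a ≠ b → ¬ G.Adj a b}

/-- Clique sizes of the spindle graph `M_{3i+1} = C_{2i+1}[2,1,2,1,…,2,1,1]`. -/
def spindleKs (i : ℕ) : Fin (2 * i + 1) → ℕ :=
  fun j => if j.val % 2 = 0 ∧ j.val < 2 * i then 2 else 1

/-- Clique sizes `[2,…,2,1,3,1,3,1,…,3,1]`: `a` copies of `2`, then a `1`,
then alternating `3,1`-pairs up to length `p`. -/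
def patternKs (p a : ℕ) : Fin p → ℕ :=
  fun j => if j.val < a then 2 else if (j.val - a) % 2 = 0 then 1 else 3

/-!
Two consecutive cliques of total size at least `5` contain a `K₅`, so assume
`k i + k (i + 1) ≤ 4` for all `i`. If moreover `∑ k ≤ 2p - 2`, give clique `i` a block of
`k i` cyclically consecutive colours modulo `4`, starting after the block of clique `i - 1`; the
total slack `4p - 2 ∑ k ≥ 4` is enough to make the blocks close up around the cycle.
If `∑ k ≥ 2p - 1` and no clique has size `1`, the sizes dominate `[2, …, 2, 1]`. Otherwise, as
`p` is odd, some clique of size `1` is not followed by one of size `3`. Starting right after it,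
the other `p - 1` cliques split into consecutive pairs of total size at most `4`, hence exactly
`4` by the bound on `∑ k`. A `3` must sit between two `1`s, so these pairs read
`2,2, …, 2,2, 1,3, …, 1,3`, which together with the final `1` is the pattern
`[2, …, 2, 1, 3, …, 1, 3, 1]`.
-/

open Fin.NatCast Fin.CommRing

theorem containsSub_top_of_not_cliqueFree {V : Type*} {G : SimpleGraph V} {n : ℕ}
    (h : ¬G.CliqueFree n) : ContainsSub G (⊤ : SimpleGraph (Fin n)) :=
  ⟨(topEmbeddingOfNotCliqueFree h).toHom, (topEmbeddingOfNotCliqueFree h).injective⟩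

theorem Finset.sum_range_two_mul {M : Type*} [AddCommMonoid M] (f : ℕ → M) (h : ℕ) :
    ∑ n ∈ range (2 * h), f n = ∑ m ∈ range h, (f (2 * m) + f (2 * m + 1)) := by
  induction h with
  | zero => simp
  | succ h ih => rw [mul_add, mul_one, sum_range_succ, sum_range_succ, sum_range_succ, ih, add_assoc]

theorem Nat.exists_add_modEq_zero {c : ℕ} (hc : 0 < c) (S : ℕ) : ∃ E < c, S + E ≡ 0 [MOD c] := by
  refine ⟨(c - S % c) % c, Nat.mod_lt _ hc, ?_⟩
  calc S + (c - S % c) % c ≡ S % c + (c - S % c) [MOD c] :=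
        (Nat.mod_modEq S c).symm.add (Nat.mod_modEq _ c)
    _ = c := Nat.add_sub_cancel' (Nat.mod_lt S hc).le
    _ ≡ 0 [MOD c] := Nat.modEq_zero_iff_dvd.2 dvd_rfl

theorem Fin.sum_range_add_natCast {p : ℕ} [NeZero p] {M : Type*} [AddCommMonoid M]
    (f : Fin p → M) (t : Fin p) : ∑ n ∈ range p, f (t + n) = ∑ i, f i := by
  rw [← Fin.sum_univ_eq_sum_range (fun n => f (t + n))]
  simp only [Fin.cast_val_eq_self]
  exact Equiv.sum_comp (Equiv.addLeft t) f

theorem Fin.add_one_of_forall_add_two {p : ℕ} [NeZero p] (hodd : Odd p) {P : Fin p → Prop}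
    (hP : ∀ j, P j → P (j + 2)) {i : Fin p} (hi : P i) : P (i + 1) := by
  obtain ⟨h, hp⟩ := hodd
  have hstep : ∀ n : ℕ, P (i + 2 * n) := by
    intro n
    induction n with
    | zero => simpa using hi
    | succ n ih => simpa [mul_add, ← add_assoc] using hP _ ih
  have hwrap : 2 * ((h + 1 : ℕ) : Fin p) = 1 :=
    calc 2 * ((h + 1 : ℕ) : Fin p) = ((2 * h + 1 : ℕ) : Fin p) + 1 := by push_cast; ring
      _ = 1 := by rw [← hp, Fin.natCast_self, zero_add]
  simpa only [hwrap] using hstep (h + 1)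

theorem exists_offsets_of_sum_le {c p : ℕ} (hc : 0 < c) (K : ℕ → ℕ)
    (hK : ∀ n, K n + K (n + 1) ≤ c) (hper : K p = K 0)
    (hsum : 2 * ∑ n ∈ range p, K n + c ≤ c * p) :
    ∃ s : ℕ → ℕ, (∀ n, s n + K n ≤ s (n + 1)) ∧ (∀ n, s (n + 1) + K (n + 1) ≤ s n + c) ∧
      s p ≡ s 0 [MOD c] := by
  set S := ∑ n ∈ range p, K n
  set slack : ℕ → ℕ := fun n => c - (K n + K (n + 1))
  have hslack : ∑ n ∈ range p, slack n + 2 * S = c * p := by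
    have hshift := (sum_range_succ K p).symm.trans (sum_range_succ' K p)
    have htotal : ∑ n ∈ range p, (slack n + (K n + K (n + 1))) = c * p := by
      rw [sum_congr rfl fun n _ => Nat.sub_add_cancel (hK n), sum_const, card_range, smul_eq_mul,
        mul_comm]
    rw [sum_add_distrib, sum_add_distrib] at htotal
    omega
  obtain ⟨E, hEc, hE⟩ := Nat.exists_add_modEq_zero hc S
  -- `s n` is the first colour of clique `n`; the `E` units of slack that make `s p` a multiple
  -- of `c` are spent as early as possible
  refine ⟨fun n => ∑ j ∈ range n, K j + min (∑ j ∈ range n, slack j) E, fun n => ?_,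
    fun n => ?_, ?_⟩
  · simp only [sum_range_succ]
    omega
  · have := hK n
    simp only [sum_range_succ, slack]
    omega
  · simpa [min_eq_right (show E ≤ ∑ n ∈ range p, slack n by nlinarith)] using hE

theorem pair_fst_ne_three_of_pair_sums {u : ℕ → ℕ} {h : ℕ} (h1 : ∀ n, 1 ≤ u n)
    (hadj : ∀ n, u n + u (n + 1) ≤ 4) (hpair : ∀ m < h, u (2 * m) + u (2 * m + 1) = 4)
    (h0 : u 0 ≠ 3) : ∀ m < h, u (2 * m) ≠ 3 := by
  intro m
  induction m with
  | zero => exact fun _ => by simpa using h0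
  | succ m ih =>
    -- a `3` is preceded by a `1`, which completes a pair starting with `3`
    intro hm h3
    have := hadj (2 * m + 1)
    have := h1 (2 * m + 1)
    have := hpair m (by omega)
    have := ih (by omega)
    rw [show 2 * (m + 1) = 2 * m + 1 + 1 by ring] at h3
    omega

theorem exists_threshold_of_pair_sums {u : ℕ → ℕ} {h : ℕ} (h1 : ∀ n, 1 ≤ u n)
    (hadj : ∀ n, u n + u (n + 1) ≤ 4) (hpair : ∀ m < h, u (2 * m) + u (2 * m + 1) = 4)
    (h0 : u 0 ≠ 3) :
    ∃ d ≤ h, (∀ n < 2 * d, 2 ≤ u n) ∧ ∀ m, d ≤ m → m < h → u (2 * m + 1) = 3 := by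
  have hne3 := pair_fst_ne_three_of_pair_sums h1 hadj hpair h0
  let P : ℕ → Prop := fun m => h ≤ m ∨ u (2 * m) = 1
  -- a pair `1,3` is followed by a pair starting with `1`
  have hP : Monotone P := by
    refine monotone_nat_of_le_succ fun m hm => ?_
    rcases hm with hm | hm
    · exact Or.inl (by omega)
    · by_cases hmh : h ≤ m + 1
      · exact Or.inl hmh
      · have := hpair m (by omega)
        have := hadj (2 * m + 1)
        have := h1 (2 * m + 1 + 1)
        exact Or.inr (by rw [show 2 * (m + 1) = 2 * m + 1 + 1 by ring]; omega)
  classical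
  have hex : ∃ m, P m := ⟨h, Or.inl le_rfl⟩
  have hd : ∀ m, P m ↔ Nat.find hex ≤ m := fun m =>
    ⟨Nat.find_min' hex, fun hm => hP hm (Nat.find_spec hex)⟩
  refine ⟨Nat.find hex, (hd h).1 (Or.inl le_rfl), fun n hn => ?_, fun m hdm hmh => ?_⟩
  · obtain ⟨m, hnm⟩ : ∃ m, n = 2 * m ∨ n = 2 * m + 1 := ⟨n / 2, by omega⟩
    obtain ⟨hmh, hm1⟩ : ¬h ≤ m ∧ u (2 * m) ≠ 1 :=
      not_or.1 (mt (hd m).1 (by rcases hnm with rfl | rfl <;> omega))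
    have := hne3 m (by omega)
    have := hadj (2 * m)
    have := hpair m (by omega)
    have := h1 (2 * m + 1)
    have := h1 (2 * m)
    rcases hnm with rfl | rfl <;> omega
  · have := (hd m).2 hdm
    have := hpair m hmh
    omega

theorem patternKs_pred_le_two {p : ℕ} (j : Fin p) : patternKs p (p - 1) j ≤ 2 := by
  have := j.isLt
  unfold patternKs
  split_ifs <;> omega

section

variable {p : ℕ} [NeZero p]

theorem cliqueExpansion_isNClique_consecutive (k : Fin p → ℕ) {i : Fin p} (hi : i ≠ i + 1) :
    (cliqueExpansion p k).IsNClique (k i + k (i + 1))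
      (({i, i + 1} : Finset (Fin p)).sigma fun _ => univ) := by
  refine ⟨?_, by simp [card_sigma, sum_pair hi]⟩
  intro v hv w hw hvw
  simp only [coe_sigma, Set.mem_sigma_iff, coe_insert, coe_singleton, Set.mem_insert_iff,
    Set.mem_singleton_iff] at hv hw
  refine ⟨hvw, ?_⟩
  rcases hv.1 with hv | hv <;> rcases hw.1 with hw | hw <;> simp [hv, hw]

theorem containsSub_cliqueExpansion_of_le {k k' : Fin p → ℕ} (t : Fin p)
    (h : ∀ j, k' j ≤ k (t + j)) :
    ContainsSub (cliqueExpansion p k) (cliqueExpansion p k') := by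
  let f : (Σ j, Fin (k' j)) → Σ i, Fin (k i) := fun v => ⟨t + v.1, Fin.castLE (h v.1) v.2⟩
  have hf : Function.Injective f := by
    rintro ⟨j, x⟩ ⟨j', x'⟩ hxx
    obtain rfl : j = j' := add_left_cancel (congrArg Sigma.fst hxx)
    simpa [f, Fin.castLE_inj] using hxx
  refine ⟨⟨f, fun {v w} hvw => ⟨hf.ne hvw.1, ?_⟩⟩, hf⟩
  rcases hvw.2 with e | e | e <;> simp [f, add_assoc, e]

theorem cliqueExpansion_colorable_of_offsets {c : ℕ} (hc : 0 < c) {k : Fin p → ℕ} (s : ℕ → ℕ)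
    (hlo : ∀ n : ℕ, s n + k n ≤ s (n + 1)) (hhi : ∀ n : ℕ, s (n + 1) + k (n + 1) ≤ s n + c)
    (hper : s p ≡ s 0 [MOD c]) : (cliqueExpansion p k).Colorable c := by
  have hwindow : ∀ {a x y : ℕ}, x < a + c → y < a + c → a ≤ x → a ≤ y → x ≡ y [MOD c] → x = y :=
    fun hx hy hax hay h => le_antisymm (h.le_of_lt_add (by omega)) (h.symm.le_of_lt_add (by omega))
  have hbounds : ∀ i : Fin p, s i + k i ≤ s (i + 1) ∧ s (i + 1) + k (i + 1) ≤ s i + c := by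
    intro i
    simpa using And.intro (hlo i) (hhi i)
  have hnext : ∀ i : Fin p, s (i + 1 : Fin p) ≡ s (i + 1) [MOD c] := by
    intro i
    have hv : ((i + 1 : Fin p) : ℕ) = (i + 1) % p := by simp [Fin.val_add]
    rcases Nat.lt_or_ge (i + 1) p with h | h
    · rw [hv, Nat.mod_eq_of_lt h]
    · rw [hv, show (i : ℕ) + 1 = p by omega, Nat.mod_self]
      exact hper.symm
  refine ⟨Coloring.mk (fun v => ⟨(s v.1 + v.2) % c, Nat.mod_lt _ hc⟩) ?_⟩
  have hstep : ∀ (i : Fin p) (x : Fin (k i)) (y : Fin (k (i + 1))),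
      ¬ s i + x ≡ s (i + 1 : Fin p) + y [MOD c] := by
    intro i x y hxy
    have := hbounds i
    have := hwindow (a := s i) (x := s i + x) (y := s (i + 1) + y) (by omega) (by omega) (by omega)
      (by omega) (hxy.trans ((hnext i).add_right y))
    omega
  rintro ⟨i, x⟩ ⟨j, y⟩ ⟨hne, hij⟩ hcol
  replace hcol : s i + x ≡ s j + y [MOD c] := congrArg Fin.val hcol
  rcases hij with rfl | rfl | rfl
  · have := hbounds i
    have hy : (y : ℕ) < k i := y.isLt
    have hxy := hwindow (a := s i) (x := s i + x) (y := s i + y) (by omega) (by omega) (by omega)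
      (by omega) hcol
    exact hne (by simpa [Fin.ext_iff] using hxy)
  · exact hstep i x y hcol
  · exact hstep j y x hcol.symm

theorem cliqueExpansion_colorable {c : ℕ} (hc : 0 < c) {k : Fin p → ℕ}
    (hk : ∀ i, k i + k (i + 1) ≤ c) (hsum : 2 * ∑ i, k i + c ≤ c * p) :
    (cliqueExpansion p k).Colorable c := by
  have hsum' : 2 * ∑ n ∈ range p, k n + c ≤ c * p := by
    have := Fin.sum_range_add_natCast k 0
    simp only [zero_add] at this
    rwa [this]
  obtain ⟨s, hlo, hhi, hper⟩ :=
    exists_offsets_of_sum_le hc (fun n : ℕ => k n) (fun n => by simpa using hk n) (by simp) hsum'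
  exact cliqueExpansion_colorable_of_offsets hc s hlo (by simpa using hhi) hper

theorem exists_eq_one_and_add_one_ne_three (hodd : Odd p) {k : Fin p → ℕ} (h1 : ∀ i, 1 ≤ k i)
    (h4 : ∀ i, k i + k (i + 1) ≤ 4) (hone : ∃ i, k i = 1) : ∃ i, k i = 1 ∧ k (i + 1) ≠ 3 := by
  by_contra! hall
  have h31 : ∀ j, k j = 3 → k (j + 1) = 1 := fun j hj => by
    have := h4 j
    have := h1 (j + 1)
    omega
  obtain ⟨i, hi⟩ := hone
  have := Fin.add_one_of_forall_add_two hodd (P := fun j => k j = 1)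
    (fun j hj => by rw [← one_add_one_eq_two, ← add_assoc]; exact h31 _ (hall j hj)) hi
  have := hall i hi
  omega

theorem pair_sums_eq_four {h : ℕ} (hp : p = 2 * h + 1) {k : Fin p → ℕ}
    (h4 : ∀ i, k i + k (i + 1) ≤ 4) (hsum : 4 * p < 2 * ∑ i, k i + 4) {i : Fin p} (hi : k i = 1) :
    ∀ m < h, k (i + 1 + (2 * m : ℕ)) + k (i + 1 + (2 * m + 1 : ℕ)) = 4 := by
  let u : ℕ → ℕ := fun n => k (i + 1 + n)
  have hlast : u (2 * h) = 1 := by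
    have : i + 1 + ((2 * h : ℕ) : Fin p) = i := by
      rw [add_assoc, add_comm 1, ← Nat.cast_add_one, ← hp, Fin.natCast_self, add_zero]
    simp only [u, this, hi]
  have htotal : ∑ m ∈ range h, (u (2 * m) + u (2 * m + 1)) + 1 = ∑ i, k i := by
    rw [← Finset.sum_range_two_mul, ← hlast, ← sum_range_succ, ← hp]
    exact Fin.sum_range_add_natCast k (i + 1)
  have hle : ∀ m ∈ range h, u (2 * m) + u (2 * m + 1) ≤ 4 := fun m _ => by
    simpa [u, add_assoc] using h4 (i + 1 + (2 * m : ℕ))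
  intro m hm
  refine (sum_eq_sum_iff_of_le hle).1 (le_antisymm (sum_le_sum hle) ?_) m (mem_range.2 hm)
  simp only [sum_const, card_range, smul_eq_mul]
  omega

theorem exists_patternKs_le (hodd : Odd p) {k : Fin p → ℕ} (h1 : ∀ i, 1 ≤ k i)
    (h4 : ∀ i, k i + k (i + 1) ≤ 4) (hsum : 4 * p < 2 * ∑ i, k i + 4) :
    ∃ a b : ℕ, ∃ t : Fin p, a + 2 * b = p - 1 ∧ ∀ j, patternKs p a j ≤ k (t + j) := by
  by_cases hone : ∃ i, k i = 1
  swap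
  · push Not at hone
    refine ⟨p - 1, 0, 0, by omega, fun j => ?_⟩
    have := patternKs_pred_le_two j
    have := h1 (0 + j)
    have := hone (0 + j)
    omega
  obtain ⟨i, hi1, hi3⟩ := exists_eq_one_and_add_one_ne_three hodd h1 h4 hone
  obtain ⟨h, hp⟩ := hodd
  let u : ℕ → ℕ := fun n => k (i + 1 + n)
  have hadj : ∀ n, u n + u (n + 1) ≤ 4 := fun n => by simpa [u, add_assoc] using h4 (i + 1 + n)
  obtain ⟨d, hdh, h2, h3⟩ := exists_threshold_of_pair_sums (u := u) (fun n => h1 _) hadj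
    (pair_sums_eq_four hp h4 hsum hi1) (by simpa [u] using hi3)
  refine ⟨2 * d, h - d, i + 1, by omega, fun j => ?_⟩
  have := j.isLt
  rw [show k (i + 1 + j) = u j by simp [u]]
  unfold patternKs
  split_ifs with hja hjb
  · exact h2 _ hja
  · exact h1 _
  · have := h3 ((j - 1 : ℕ) / 2) (by omega) (by omega)
    rw [show 2 * ((j - 1 : ℕ) / 2) + 1 = j by omega] at this
    omega

end

theorem cliqueExpansion_fourColorable_cases (p : ℕ) [NeZero p] (hp : 7 ≤ p) (hodd : Odd p)
    (ks : Fin p → ℕ) (hks : ∀ i, 1 ≤ ks i) :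
    ContainsSub (cliqueExpansion p ks) (⊤ : SimpleGraph (Fin 5)) ∨
    (∃ a b : ℕ, a + 2 * b = p - 1 ∧
      ContainsSub (cliqueExpansion p ks) (cliqueExpansion p (patternKs p a))) ∨
    (cliqueExpansion p ks).Colorable 4 := by
  by_cases h5 : ∃ i, 5 ≤ ks i + ks (i + 1)
  · obtain ⟨i, hi⟩ := h5
    have : Nontrivial (Fin p) := Fin.nontrivial_iff_two_le.2 (by omega)
    have hclique := cliqueExpansion_isNClique_consecutive ks (left_ne_add.2 one_ne_zero : i ≠ i + 1)
    exact Or.inl (containsSub_top_of_not_cliqueFree fun hfree =>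
      hclique.not_cliqueFree (hfree.mono hi))
  push Not at h5
  have h4 : ∀ i, ks i + ks (i + 1) ≤ 4 := fun i => Nat.lt_succ_iff.mp (h5 i)
  by_cases hsum : 2 * ∑ i, ks i + 4 ≤ 4 * p
  · exact Or.inr (Or.inr (cliqueExpansion_colorable (by norm_num) h4 hsum))
  · obtain ⟨a, b, t, hab, hle⟩ := exists_patternKs_le hodd hks h4 (by omega)
    exact Or.inr (Or.inl ⟨a, b, hab, containsSub_cliqueExpansion_of_le t hle⟩)
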